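/- arXiv:1906.08046 — 2 statements merged into one kernel-verified Lean document; each statement's English description precedes it below -/
import Mathlib

section
/- Let G be a finite cyclic group of order N and let p be a prime and b ≥ 0 integers with p^{b+1} | N. Set e = p^b and f = p^{b+1}. Then for every x ∈ G, w_e(x) − w_f(x) = (1/e) Σ_{d | f} Σ_{χ of order d} ℓ_d χ(x), where ℓ_d = 1 − 1/p if d ≠ f and ℓ_d = −1/p if d = f. -/
open Finset

private lemma char_sum_pow (G : Type*) [CommGroup G] [Fintype G] [DecidableEq G] [IsCyclic G]
    [Fintype (G →* ℂˣ)] (k : ℕ) (hk : k ∣ Fintype.card G) (x : G) :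
    ∑ χ : G →* ℂˣ, (if χ ^ k = 1 then ((χ x : ℂˣ) : ℂ) else 0) =
      if ∃ y : G, y ^ k = x then (k : ℂ) else 0 := by
  classical
  have hk0 : k ≠ 0 := by
    rintro rfl
    exact absurd (zero_dvd_iff.mp hk) Fintype.card_ne_zero
  haveI : NeZero k := ⟨hk0⟩
  set S : Subgroup (G →* ℂˣ) := (powMonoidHom k : (G →* ℂˣ) →* (G →* ℂˣ)).ker with hS
  have hmem : ∀ χ : G →* ℂˣ, χ ∈ S ↔ χ ^ k = 1 := fun χ => by
    simp [hS, MonoidHom.mem_ker, powMonoidHom_apply]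
  let φ : S →* ℂ := (Units.coeHom ℂ).comp ((MonoidHom.eval x).comp S.subtype)
  have h1 : ∑ χ : G →* ℂˣ, (if χ ^ k = 1 then ((χ x : ℂˣ) : ℂ) else 0) = ∑ χ : S, φ χ := by
    calc ∑ χ : G →* ℂˣ, (if χ ^ k = 1 then ((χ x : ℂˣ) : ℂ) else 0)
        = ∑ χ ∈ Finset.univ.filter (fun χ : G →* ℂˣ => χ ^ k = 1),
            ((χ x : ℂˣ) : ℂ) := (Finset.sum_filter _ _).symm
      _ = ∑ χ : S, ((χ.1 x : ℂˣ) : ℂ) := by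
          refine Finset.sum_subtype _ (fun χ => ?_) _
          simp [hmem]
      _ = ∑ χ : S, φ χ := rfl
  -- cardinality of S
  have hN : NeZero (Fintype.card G) := ⟨Fintype.card_ne_zero⟩
  obtain ⟨ι₀⟩ := IsCyclic.monoidHom_mulEquiv_rootsOfUnity G ℂˣ
  have hNc : Nat.card G = Fintype.card G := Nat.card_eq_fintype_card
  rw [hNc] at ι₀
  let ι : (G →* ℂˣ) ≃* rootsOfUnity (Fintype.card G) ℂ :=
    ι₀.trans (rootsOfUnityUnitsMulEquiv ℂ (Fintype.card G))
  have key : ∀ χ : G →* ℂˣ, χ ^ k = 1 ↔ ((ι χ : ℂˣ) : ℂˣ) ^ k = 1 := by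
    intro χ
    constructor
    · intro h
      have : (ι χ) ^ k = 1 := by rw [← map_pow, h, map_one]
      simpa using congrArg (Subtype.val) this
    · intro h
      have h' : (ι χ) ^ k = 1 := Subtype.ext (by simpa using h)
      have := congrArg ι.symm ((map_pow ι χ k).trans h')
      simpa using this
  have hcard : Fintype.card S = k := by
    have e : S ≃ rootsOfUnity k ℂ :=
      { toFun := fun χ => ⟨(ι χ.1 : ℂˣ), by
          rw [mem_rootsOfUnity]
          exact (key χ.1).mp ((hmem χ.1).mp χ.2)⟩
        invFun := fun ζ => ⟨ι.symm ⟨ζ.1, rootsOfUnity_le_of_dvd hk ζ.2⟩, by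
          rw [hmem, key]
          simpa using (mem_rootsOfUnity k ζ.1).mp ζ.2⟩
        left_inv := fun χ => by
          ext1
          simp
        right_inv := fun ζ => by
          ext1
          simp }
    rw [← Nat.card_eq_fintype_card, Nat.card_congr e, Complex.card_rootsOfUnity]
  have hiff : φ = 1 ↔ ∃ y : G, y ^ k = x := by
    constructor
    · intro h
      by_contra hx
      set P : Subgroup G := (powMonoidHom k : G →* G).range with hP
      have hxP : x ∉ P := by
        intro hxx
        obtain ⟨y, hy⟩ := hxx
        exact hx ⟨y, hy⟩
      have hxq : (QuotientGroup.mk x : G ⧸ P) ≠ 1 := by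
        simpa [QuotientGroup.eq_one_iff] using hxP
      haveI : Finite (G ⧸ P) := Quotient.finite _
      haveI : NeZero ((Monoid.exponent (G ⧸ P) : ℂ)) :=
        ⟨Nat.cast_ne_zero.mpr Monoid.exponent_ne_zero_of_finite⟩
      obtain ⟨ψ, hψ⟩ :=
        CommGroup.exists_apply_ne_one_of_hasEnoughRootsOfUnity (G ⧸ P) ℂ hxq
      set χ : G →* ℂˣ := ψ.comp (QuotientGroup.mk' P) with hχ
      have hχS : χ ∈ S := by
        rw [hmem]
        ext g
        have : (g : G) ^ k ∈ P := ⟨g, rfl⟩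
        simp only [MonoidHom.mul_apply, MonoidHom.pow_apply, MonoidHom.one_apply, hχ,
          MonoidHom.comp_apply, QuotientGroup.mk'_apply]
        rw [← map_pow, ← QuotientGroup.mk_pow]
        rw [(QuotientGroup.eq_one_iff _).mpr this, map_one]
      have := congrFun (congrArg (fun (f : S →* ℂ) => (f : S → ℂ)) h) ⟨χ, hχS⟩
      simp only [MonoidHom.one_apply] at this
      apply hψ
      have hχx : ((χ x : ℂˣ) : ℂ) = 1 := this
      have : (χ x : ℂˣ) = 1 := Units.ext hχx
      simpa [hχ] using this
    · rintro ⟨y, rfl⟩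
      ext χ
      have hχ : χ.1 ^ k = 1 := (hmem χ.1).mp χ.2
      have : χ.1 (y ^ k) = 1 := by
        rw [map_pow, ← MonoidHom.pow_apply, hχ, MonoidHom.one_apply]
      simp only [MonoidHom.one_apply]
      show ((χ.1 (y ^ k) : ℂˣ) : ℂ) = 1
      rw [this]; rfl
  rw [h1, sum_hom_units φ, hcard]
  by_cases hx : ∃ y : G, y ^ k = x
  · rw [if_pos (hiff.mpr hx), if_pos hx]
  · rw [if_neg (fun h => hx (hiff.mp h)), if_neg hx]; simp

theorem stmt_4 (G : Type*) [CommGroup G] [Fintype G] [DecidableEq G] [IsCyclic G]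
    [Fintype (G →* ℂˣ)] (N p b : ℕ) (hN : Fintype.card G = N) (hp : p.Prime)
    (hdvd : p ^ (b + 1) ∣ N) (e f : ℕ) (he : e = p ^ b) (hf : f = p ^ (b + 1))
    (x : G) :
    (if ∃ y : G, y ^ e = x then (1 : ℂ) else 0) -
        (if ∃ y : G, y ^ f = x then (1 : ℂ) else 0) =
      (1 / (e : ℂ)) *
        ∑ d ∈ f.divisors, ∑ χ : G →* ℂˣ,
          (if orderOf χ = d then
            (if d ≠ f then 1 - 1 / (p : ℂ) else -(1 / (p : ℂ))) * ((χ x : ℂˣ) : ℂ)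
          else 0) := by
  classical
  have hp0 : (p : ℂ) ≠ 0 := Nat.cast_ne_zero.mpr hp.pos.ne'
  have he0 : e ≠ 0 := by rw [he]; exact pow_ne_zero _ hp.pos.ne'
  have hf0 : f ≠ 0 := by rw [hf]; exact pow_ne_zero _ hp.pos.ne'
  have hec0 : (e : ℂ) ≠ 0 := Nat.cast_ne_zero.mpr he0
  have hef : e ∣ f := by rw [he, hf]; exact pow_dvd_pow _ (Nat.le_succ b)
  have hfN : f ∣ Fintype.card G := by rw [hN, hf]; exact hdvd
  have heN : e ∣ Fintype.card G := hef.trans hfN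
  have hfe : f = e * p := by rw [he, hf, pow_succ]
  -- rewrite the double sum
  have step1 : ∑ d ∈ f.divisors, ∑ χ : G →* ℂˣ,
        (if orderOf χ = d then
          (if d ≠ f then 1 - 1 / (p : ℂ) else -(1 / (p : ℂ))) * ((χ x : ℂˣ) : ℂ)
        else 0) =
      ∑ χ : G →* ℂˣ, ((if χ ^ e = 1 then ((χ x : ℂˣ) : ℂ) else 0)
        - (1 / (p : ℂ)) * (if χ ^ f = 1 then ((χ x : ℂˣ) : ℂ) else 0)) := by
    rw [Finset.sum_comm]
    refine Finset.sum_congr rfl fun χ _ => ?_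
    rw [Finset.sum_ite_eq f.divisors (orderOf χ)
      (fun d => (if d ≠ f then 1 - 1 / (p : ℂ) else -(1 / (p : ℂ))) * ((χ x : ℂˣ) : ℂ))]
    have hde : orderOf χ ∣ e ↔ χ ^ e = 1 := orderOf_dvd_iff_pow_eq_one
    have hdf : orderOf χ ∣ f ↔ χ ^ f = 1 := orderOf_dvd_iff_pow_eq_one
    by_cases h1 : χ ^ e = 1
    · have hdvde : orderOf χ ∣ e := hde.mpr h1
      have h2 : χ ^ f = 1 := hdf.mp (hdvde.trans hef)
      have hmemd : orderOf χ ∈ f.divisors := Nat.mem_divisors.mpr ⟨hdvde.trans hef, hf0⟩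
      have hne : orderOf χ ≠ f := by
        intro hh
        have : f ≤ e := hh ▸ Nat.le_of_dvd (Nat.pos_of_ne_zero he0) hdvde
        have : e < f := by
          rw [he, hf]
          exact pow_lt_pow_right₀ hp.one_lt (Nat.lt_succ_self b)
        omega
      rw [if_pos hmemd, if_pos hne, if_pos h1, if_pos h2]
      ring
    · by_cases h2 : χ ^ f = 1
      · have hdvdf : orderOf χ ∣ f := hdf.mpr h2
        have hmemd : orderOf χ ∈ f.divisors := Nat.mem_divisors.mpr ⟨hdvdf, hf0⟩
        have heq : orderOf χ = f := by
          obtain ⟨i, hi, hio⟩ := (Nat.dvd_prime_pow hp).mp (hf ▸ hdvdf)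
          rcases Nat.lt_succ_iff_lt_or_eq.mp (Nat.lt_succ_of_le hi) with hi' | hi'
          · exact absurd (hde.mp (hio ▸ (he ▸ pow_dvd_pow p (by omega)))) h1
          · rw [hio, hi', hf]
        rw [if_pos hmemd, if_neg (by simp [heq]), if_neg h1, if_pos h2]
        ring
      · have hnd : orderOf χ ∉ f.divisors := by
          rw [Nat.mem_divisors]
          rintro ⟨hd, -⟩
          exact h2 (hdf.mp hd)
        rw [if_neg hnd, if_neg h1, if_neg h2]
        ring
  rw [step1, Finset.sum_sub_distrib, ← Finset.mul_sum,
    char_sum_pow G e heN x, char_sum_pow G f hfN x]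
  have himp : (∃ y : G, y ^ f = x) → (∃ y : G, y ^ e = x) := by
    rintro ⟨y, rfl⟩
    exact ⟨y ^ p, by rw [← pow_mul, mul_comm, ← hfe]⟩
  have hfc : (f : ℂ) = e * p := by rw [hfe]; push_cast; ring
  by_cases hE : ∃ y : G, y ^ e = x
  · by_cases hF : ∃ y : G, y ^ f = x
    · rw [if_pos hE, if_pos hF, if_pos hE, if_pos hF, hfc]
      field_simp
    · rw [if_pos hE, if_neg hF, if_pos hE, if_neg hF]
      field_simp
      ring
  · have hF : ¬∃ y : G, y ^ f = x := fun h => hE (himp h)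
    rw [if_neg hE, if_neg hF, if_neg hE, if_neg hF]
    ring
end

section
/- Let G be a finite cyclic group of order N, r | N with factorization data as follows: write N = Π p^{a_p}, r = Π p^{b_p}; let u be the radical of the part of N coprime to r, s the product of p^{b_p} over primes with a_p = b_p > 0, and p_1,...,p_k the primes with a_p > b_p > 0, with e_i = p_i^{b_{p_i}}, f_i = p_i^{b_{p_i}+1}. Then for every x ∈ G, x has order N/r if and only if x is u-free, x is an s-th power, and for each i, x is an e_i-th power but not an f_i-th power. -/
/-!
In a cyclic group of order `N` the image of the `d`-th power map, for `d ∣ N`, is the subgroup of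
order `N / d`, i.e. the kernel of the `N / d`-th power map; hence `x` is a `d`-th power exactly
when `d ∣ N / orderOf x`. So `x` has order `N / r` iff `m = N / orderOf x` equals `r`, and the
conditions on `x` become divisibility conditions on `m ∣ N`. These pin down `m.factorization p`
prime by prime: it is `0` when `p ∤ r` (as `m` is coprime to `u`), it is at least, hence equal
to, `r.factorization p = N.factorization p` when `p ∣ s`, and it is squeezed to
`e = r.factorization p` by `p ^ e ∣ m` and `¬ p ^ (e + 1) ∣ m` at the remaining primes.
-/

namespace IsCyclic

variable {G : Type*} [CommGroup G] [Finite G] [IsCyclic G]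

theorem range_powMonoidHom_eq_ker {d : ℕ} (hd : d ∣ Nat.card G) :
    (powMonoidHom d : G →* G).range = (powMonoidHom (Nat.card G / d)).ker := by
  refine Subgroup.eq_of_le_of_card_ge ?_ ?_
  · rintro _ ⟨y, rfl⟩
    simp [← pow_mul, Nat.mul_div_cancel' hd, pow_card_eq_one']
  · rw [card_powMonoidHom_range, card_powMonoidHom_ker, Nat.gcd_eq_right hd,
      Nat.gcd_eq_right (Nat.div_dvd_of_dvd hd)]

theorem exists_pow_eq_iff_dvd_card_div_orderOf {d : ℕ} (hd : d ∣ Nat.card G) (x : G) :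
    (∃ y : G, y ^ d = x) ↔ d ∣ Nat.card G / orderOf x := by
  have hpow : (∃ y : G, y ^ d = x) ↔ x ^ (Nat.card G / d) = 1 :=
    SetLike.ext_iff.mp (range_powMonoidHom_eq_ker hd) x
  rw [hpow, ← orderOf_dvd_iff_pow_eq_one, Nat.dvd_div_iff_mul_dvd hd,
    Nat.dvd_div_iff_mul_dvd (orderOf_dvd_natCard x), mul_comm]

end IsCyclic

namespace Nat

/-- `u` of the statement: the radical of the part of `N` coprime to `r`. -/
def coprimeRadical (N r : ℕ) : ℕ :=
  ∏ p ∈ N.primeFactors.filter (fun p => r.factorization p = 0), p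

/-- `s` of the statement: the part of `r` at the primes where `r` and `N` have equal multiplicity. -/
def fullMultiplicityPart (N r : ℕ) : ℕ :=
  ∏ p ∈ N.primeFactors.filter
    (fun p => N.factorization p = r.factorization p ∧ 0 < r.factorization p), p ^ r.factorization p

theorem prod_pow_factorization_dvd (S : Finset ℕ) (n : ℕ) :
    ∏ p ∈ S, p ^ n.factorization p ∣ n := by
  rcases eq_or_ne n 0 with rfl | hn
  · exact dvd_zero _
  calc ∏ p ∈ S, p ^ n.factorization p = ∏ p ∈ S ∩ n.primeFactors, p ^ n.factorization p := by
        refine (Finset.prod_subset Finset.inter_subset_left fun p hpS hp => ?_).symm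
        have hpn : p ∉ n.primeFactors := fun h => hp (Finset.mem_inter.mpr ⟨hpS, h⟩)
        rw [← support_factorization, Finsupp.notMem_support_iff] at hpn
        rw [hpn, pow_zero]
    _ ∣ ∏ p ∈ n.primeFactors, p ^ n.factorization p :=
        Finset.prod_dvd_prod_of_subset _ _ _ Finset.inter_subset_right
    _ = n := (prod_primeFactors_pow_factorization hn).symm

theorem coprimeRadical_dvd (N r : ℕ) : coprimeRadical N r ∣ N :=
  (Finset.prod_dvd_prod_of_subset _ _ _ (Finset.filter_subset _ _)).trans (prod_primeFactors_dvd N)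

theorem coprime_coprimeRadical (N : ℕ) {r : ℕ} (hr : r ≠ 0) : Coprime (coprimeRadical N r) r := by
  refine Coprime.prod_left fun p hp => ?_
  rw [Finset.mem_filter] at hp
  have hpp := prime_of_mem_primeFactors hp.1
  exact hpp.coprime_iff_not_dvd.mpr fun hdvd => (hpp.factorization_pos_of_dvd hr hdvd).ne' hp.2

theorem fullMultiplicityPart_dvd (N r : ℕ) : fullMultiplicityPart N r ∣ r :=
  prod_pow_factorization_dvd _ r

theorem eq_iff_coprime_and_dvd_of_dvd {N r m : ℕ} (hN : N ≠ 0) (hr : r ∣ N) (hm : m ∣ N) :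
    m = r ↔ Coprime (coprimeRadical N r) m ∧ fullMultiplicityPart N r ∣ m ∧
      ∀ p ∈ N.primeFactors, r.factorization p < N.factorization p → 0 < r.factorization p →
        p ^ r.factorization p ∣ m ∧ ¬ p ^ (r.factorization p + 1) ∣ m := by
  have hr0 : r ≠ 0 := ne_zero_of_dvd_ne_zero hN hr
  have hm0 : m ≠ 0 := ne_zero_of_dvd_ne_zero hN hm
  refine ⟨?_, fun ⟨hcop, hfull, hpart⟩ => eq_of_factorization_eq hm0 hr0 fun p => ?_⟩
  · rintro rfl
    exact ⟨coprime_coprimeRadical N hr0, fullMultiplicityPart_dvd N m, fun p hp _ _ =>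
      ⟨ordProj_dvd m p, pow_succ_factorization_not_dvd hm0 (prime_of_mem_primeFactors hp)⟩⟩
  have hmN := (factorization_le_iff_dvd hm0 hN).mpr hm p
  have hrN := (factorization_le_iff_dvd hr0 hN).mpr hr p
  by_cases hp : p ∈ N.primeFactors
  swap
  · rw [← support_factorization, Finsupp.notMem_support_iff] at hp
    omega
  have hpp := prime_of_mem_primeFactors hp
  have hdvd_iff {k : ℕ} : p ^ k ∣ m ↔ k ≤ m.factorization p := hpp.pow_dvd_iff_le_factorization hm0
  rcases Nat.eq_zero_or_pos (r.factorization p) with hzero | hpos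
  · have hpu : p ∣ coprimeRadical N r := Finset.dvd_prod_of_mem _ (Finset.mem_filter.mpr ⟨hp, hzero⟩)
    have hpm : ¬ p ∣ m := hpp.coprime_iff_not_dvd.mp (hcop.coprime_dvd_left hpu)
    rw [hzero, factorization_eq_zero_of_not_dvd hpm]
  rcases hrN.lt_or_eq with hlt | heq
  · have := hpart p hp hlt hpos
    rw [hdvd_iff, hdvd_iff] at this
    omega
  · have hps : p ^ r.factorization p ∣ fullMultiplicityPart N r :=
      Finset.dvd_prod_of_mem (fun p => p ^ r.factorization p)
        (Finset.mem_filter.mpr ⟨hp, heq.symm, hpos⟩)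
    have := hdvd_iff.mp (hps.trans hfull)
    omega

end Nat

theorem stmt_12 (G : Type*) [CommGroup G] [Fintype G] [IsCyclic G]
    (N r : ℕ) (hN : Fintype.card G = N) (hr : r ∣ N)
    (u s : ℕ)
    (hu : u = ∏ p ∈ N.primeFactors.filter (fun p => r.factorization p = 0), p)
    (hs : s = ∏ p ∈ N.primeFactors.filter
        (fun p => N.factorization p = r.factorization p ∧ 0 < r.factorization p),
      p ^ r.factorization p)
    (x : G) :
    orderOf x = N / r ↔
      ((∀ d : ℕ, d ∣ u → (∃ y : G, y ^ d = x) → d = 1) ∧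
        (∃ y : G, y ^ s = x) ∧
        (∀ p ∈ N.primeFactors,
          r.factorization p < N.factorization p → 0 < r.factorization p →
            (∃ y : G, y ^ (p ^ r.factorization p) = x) ∧
              ¬ ∃ y : G, y ^ (p ^ (r.factorization p + 1)) = x)) := by
  obtain rfl : Nat.card G = N := Nat.card_eq_fintype_card.trans hN
  change u = Nat.coprimeRadical _ r at hu
  change s = Nat.fullMultiplicityPart _ r at hs
  subst hu hs
  have hN0 : Nat.card G ≠ 0 := Nat.card_pos.ne'
  have hpow {d : ℕ} (hd : d ∣ Nat.card G) := IsCyclic.exists_pow_eq_iff_dvd_card_div_orderOf hd x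
  have hord := orderOf_dvd_natCard x
  rw [← Nat.div_eq_iff_eq_of_dvd_dvd hN0 hord (Nat.div_dvd_of_dvd hr), Nat.div_div_self hr hN0,
    Nat.eq_iff_coprime_and_dvd_of_dvd hN0 hr (Nat.div_dvd_of_dvd hord)]
  refine and_congr ?_ (and_congr (hpow ((Nat.fullMultiplicityPart_dvd _ r).trans hr)).symm ?_)
  · exact Nat.gcd_eq_one_iff.trans <| forall_congr' fun d => imp_congr_right fun hd =>
      imp_congr_left (hpow (hd.trans (Nat.coprimeRadical_dvd _ r))).symm
  · refine forall₂_congr fun p hp => imp_congr_right fun hlt => imp_congr_right fun _ => ?_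
    have hpN {k : ℕ} (hk : k ≤ (Nat.card G).factorization p) : p ^ k ∣ Nat.card G :=
      (pow_dvd_pow p hk).trans (Nat.ordProj_dvd _ p)
    exact and_congr (hpow (hpN hlt.le)).symm (not_congr (hpow (hpN hlt)).symm)
end
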